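/- Let u be a node of T with a descendant subtree T_u having leaf set L_u, let θ* ∈ (−1,1)^E and θ̂ ∈ (−1,1)^{E(T_u)}, and let σ be sampled from the CFN measure P_{θ*} on T. Then the unsigned magnetization σ_u · Z_u^{θ̂,T_u}(σ_{L_u}) is independent of the root spin σ_u under P_{θ*}. -/

import Mathlib

open Finset
open scoped Classical

noncomputable section

namespace CFN

variable {V : Type*} [Fintype V] [DecidableEq V]

/-- The `±1` spin attached to a Boolean. -/
def spin (b : Bool) : ℝ := if b then 1 else -1

/-- The product of the spins at the two endpoints of an unordered edge. -/
def edgeSpin (σ : V → Bool) : Sym2 V → ℝ :=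
  Sym2.lift ⟨fun x y => spin (σ x) * spin (σ y), fun x y => mul_comm _ _⟩

/-- The CFN weight of a configuration: `(1/2) · ∏_{e={x,y}∈F} (1 + σ_x σ_y θ_e)/2`. -/
def cfnWeight (F : Finset (Sym2 V)) (θ : Sym2 V → ℝ) (σ : V → Bool) : ℝ :=
  (1 / 2) * ∏ e ∈ F, (1 + edgeSpin σ e * θ e) / 2

/-- The probability of the event `A` under the CFN measure with vertex set `W` and edge
set `F` (the event should only depend on the coordinates in `W`; configurations are
represented as functions on the ambient vertex type, whence the normalizing factor). -/
def cfnProb (W : Finset V) (F : Finset (Sym2 V)) (θ : Sym2 V → ℝ)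
    (A : Set (V → Bool)) : ℝ :=
  ((2 : ℝ) ^ W.card / (2 : ℝ) ^ Fintype.card V) *
    ∑ σ : V → Bool, Set.indicator A (cfnWeight F θ) σ

/-- Expectation of `f` under the CFN measure on the full vertex set with edge set `F`. -/
def cfnExp (F : Finset (Sym2 V)) (θ : Sym2 V → ℝ) (f : (V → Bool) → ℝ) : ℝ :=
  ∑ σ : V → Bool, cfnWeight F θ σ * f σ

/-- The magnetization at `u` for the tree with vertex set `W`, edge set `F`, leaf set
`Lu`, parameter `θ`, and observed leaf configuration `τ`:
`P_θ(σ_u = +1 | σ_{L_u} = τ_{L_u}) − P_θ(σ_u = −1 | σ_{L_u} = τ_{L_u})`. -/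
def magnetization (W : Finset V) (F : Finset (Sym2 V)) (θ : Sym2 V → ℝ)
    (u : V) (Lu : Finset V) (τ : V → Bool) : ℝ :=
  (cfnProb W F θ {η | η u = true ∧ ∀ x ∈ Lu, η x = τ x} -
      cfnProb W F θ {η | η u = false ∧ ∀ x ∈ Lu, η x = τ x}) /
    cfnProb W F θ {η | ∀ x ∈ Lu, η x = τ x}

variable (G : SimpleGraph V) [DecidableRel G.Adj]

/-- The vertex set of the descendant subtree of `u` with respect to `v`: all vertices `w`
whose shortest path to `v` passes through `u`. -/
def descVerts (u v : V) : Finset V :=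
  Finset.univ.filter fun w => G.dist w v = G.dist w u + G.dist u v

/-- The edge set of the descendant subtree of `u` with respect to `v`. -/
def descEdges (u v : V) : Finset (Sym2 V) :=
  G.edgeFinset.filter fun e => ∀ x ∈ e, x ∈ descVerts G u v

/-- The leaf set of the tree `G`. -/
def leaves : Finset V := Finset.univ.filter fun w => G.degree w = 1

/-- The leaf set of the descendant subtree of `u` with respect to `v`. -/
def descLeaves (u v : V) : Finset V :=
  (descVerts G u v).filter fun w => G.degree w = 1

/-- The magnetization at `u` computed on the descendant subtree of `u` with respect to
`v`, with parameters `θ` and leaf data taken from the configuration `τ`. -/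
def descMag (u v : V) (θ : Sym2 V → ℝ) (τ : V → Bool) : ℝ :=
  magnetization (descVerts G u v) (descEdges G u v) θ u (descLeaves G u v) τ

end CFN

/-!
The global flip `σ ↦ -σ` preserves `P_θ*`, and `Z_u` is odd in the leaf data, so the flip fixes
`σ_u Z_u` while exchanging the events `σ_u = +1` and `σ_u = -1`. Hence each value of `σ_u Z_u`
is split evenly between the two root spins, and independence follows once `P_θ*` has total mass
`1`. On a tree this holds because, expanding `∏ₑ (1 + σ_x σ_y θ_e)`, each nonempty edge set `t`
contributes `0`: flipping a vertex that lies on exactly one edge of `t` (a leaf of the forest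
`t`) reverses the sign of its monomial.
-/

namespace SimpleGraph

variable {V : Type*} {G : SimpleGraph V}

lemma IsTree.eq_of_adj_of_dist_lt (hT : G.IsTree) (r : V) {w x y : V} (hx : G.Adj x w)
    (hy : G.Adj y w) (hxw : G.dist r x < G.dist r w) (hyw : G.dist r y < G.dist r w) :
    x = y := by
  have penultimate_eq : ∀ z, G.Adj z w → G.dist r z < G.dist r w →
      ∃ p : G.Walk r w, p.IsPath ∧ p.penultimate = z := by
    intro z hz hzw
    obtain ⟨q, hq⟩ := (hT.connected r z).exists_walk_length_eq_dist
    have hd : G.dist r w = G.dist r z + 1 := by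
      have := hT.dist_eq_dist_add_one_of_adj r hz
      omega
    exact ⟨q.concat hz, (q.concat hz).isPath_of_length_eq_dist (by simp [hq, hd]),
      q.penultimate_concat hz⟩
  obtain ⟨p, hp, rfl⟩ := penultimate_eq x hx hxw
  obtain ⟨p', hp', rfl⟩ := penultimate_eq y hy hyw
  rw [(hT.existsUnique_path r w).unique hp hp']

lemma IsTree.exists_vertex_mem_unique_edge [Fintype V] (hT : G.IsTree) {t : Finset (Sym2 V)}
    (ht : ∀ e ∈ t, e ∈ G.edgeSet) (hne : t.Nonempty) :
    ∃ w, ∃ e₀ ∈ t, w ∈ e₀ ∧ ∀ e ∈ t, w ∈ e → e = e₀ := by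
  let D : Finset V := Finset.univ.filter fun z => ∃ e ∈ t, z ∈ e
  obtain ⟨e₁, he₁⟩ := hne
  let r := e₁.out.1
  -- a vertex of `t` farthest from `r` has only one `t`-neighbour, its parent towards `r`
  obtain ⟨w, hwD, hwmax⟩ := D.exists_max_image (G.dist r)
    ⟨r, by simpa [D] using ⟨e₁, he₁, Sym2.out_fst_mem e₁⟩⟩
  obtain ⟨e₀, he₀, hwe₀⟩ : ∃ e ∈ t, w ∈ e := by simpa [D] using hwD
  have toward_r : ∀ e ∈ t, w ∈ e → ∃ x, e = s(w, x) ∧ G.Adj x w ∧ G.dist r x < G.dist r w := by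
    intro e he hwe
    obtain ⟨x, rfl⟩ := Sym2.mem_iff_exists.mp hwe
    have hadj : G.Adj w x := ht _ he
    have hxD : x ∈ D := by simpa [D] using ⟨_, he, Sym2.mem_mk_right w x⟩
    exact ⟨x, rfl, hadj.symm, (hwmax x hxD).lt_of_ne (hT.dist_ne_of_adj r hadj).symm⟩
  refine ⟨w, e₀, he₀, hwe₀, fun e he hwe => ?_⟩
  obtain ⟨x, rfl, hx, hxw⟩ := toward_r e he hwe
  obtain ⟨y, rfl, hy, hyw⟩ := toward_r e₀ he₀ hwe₀
  rw [hT.eq_of_adj_of_dist_lt r hx hy hxw hyw]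

end SimpleGraph

section Independence

variable {Ω : Type*} [Fintype Ω]

lemma sum_indicator_inter_preimage {β : Type*} [Fintype β] (w : Ω → ℝ) (S : Set Ω)
    (b : Ω → β) (B : Set β) :
    ∑ ω, (S ∩ b ⁻¹' B).indicator w ω =
      ∑ c, if c ∈ B then ∑ ω, (S ∩ b ⁻¹' {c}).indicator w ω else 0 := by
  simp_rw [Finset.ite_sum_zero]
  rw [Finset.sum_comm]
  refine Finset.sum_congr rfl fun ω _ => ?_
  rw [Fintype.sum_eq_single (b ω) fun c hc => by simp [Ne.symm hc]]
  by_cases hB : b ω ∈ B <;> simp [Set.indicator_apply, hB]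

lemma sum_indicator_inter_preimage_singleton_eq_half {w : Ω → ℝ} {g : Ω → Ω}
    (hg : g.Involutive) (hwg : ∀ ω, w (g ω) = w ω) {b : Ω → Bool} (hb : ∀ ω, b (g ω) = !b ω)
    {S : Set Ω} (hS : g ⁻¹' S = S) (c : Bool) :
    ∑ ω, (S ∩ b ⁻¹' {c}).indicator w ω = (∑ ω, S.indicator w ω) / 2 := by
  have swap : ∑ ω, (S ∩ b ⁻¹' {!c}).indicator w ω = ∑ ω, (S ∩ b ⁻¹' {c}).indicator w ω := by
    refine Fintype.sum_bijective g hg.bijective _ _ fun ω => ?_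
    have hgS : g ω ∈ S ↔ ω ∈ S := Set.ext_iff.mp hS ω
    simp [Set.indicator_apply, hgS, hb, hwg]
  have split : ∑ ω, S.indicator w ω =
      ∑ ω, (S ∩ b ⁻¹' {c}).indicator w ω + ∑ ω, (S ∩ b ⁻¹' {!c}).indicator w ω := by
    rw [← Finset.sum_add_distrib]
    refine Finset.sum_congr rfl fun ω _ => ?_
    cases c <;> cases h : b ω <;> simp [Set.indicator_apply, h]
  linarith

theorem sum_indicator_inter_eq_mul_of_involutive {w : Ω → ℝ} (hw : ∑ ω, w ω = 1)
    {g : Ω → Ω} (hg : g.Involutive) (hwg : ∀ ω, w (g ω) = w ω) {b : Ω → Bool}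
    (hb : ∀ ω, b (g ω) = !b ω) {X : Set Ω} (hX : g ⁻¹' X = X) (B : Set Bool) :
    ∑ ω, (X ∩ b ⁻¹' B).indicator w ω =
      (∑ ω, X.indicator w ω) * ∑ ω, (b ⁻¹' B).indicator w ω := by
  have hhalf : ∀ c, ∑ ω, (b ⁻¹' {c}).indicator w ω = 1 / 2 := fun c => by
    simpa [hw] using
      sum_indicator_inter_preimage_singleton_eq_half hg hwg hb (S := Set.univ) rfl c
  have hB : ∑ ω, (b ⁻¹' B).indicator w ω = ∑ c, if c ∈ B then 1 / 2 else 0 := by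
    simpa [hhalf] using sum_indicator_inter_preimage w Set.univ b B
  simp only [hB, sum_indicator_inter_preimage w X b B,
    sum_indicator_inter_preimage_singleton_eq_half hg hwg hb hX, Fintype.sum_bool]
  split_ifs <;> ring

end Independence

namespace CFN

variable {V : Type*}

@[simp]
lemma spin_not (b : Bool) : spin (!b) = -spin b := by
  cases b <;> simp [spin]

@[simp]
lemma edgeSpin_mk (σ : V → Bool) (x y : V) :
    edgeSpin σ s(x, y) = spin (σ x) * spin (σ y) := rfl

lemma cfnProb_univ [Fintype V] [DecidableEq V] (F : Finset (Sym2 V)) (θ : Sym2 V → ℝ)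
    (A : Set (V → Bool)) : cfnProb Finset.univ F θ A = ∑ σ, A.indicator (cfnWeight F θ) σ := by
  simp [cfnProb]

section SpinFlip

def spinFlip (σ : V → Bool) : V → Bool := fun x => !σ x

lemma spinFlip_involutive : Function.Involutive (spinFlip : (V → Bool) → V → Bool) := by
  intro σ
  funext x
  simp [spinFlip]

@[simp]
lemma edgeSpin_spinFlip (σ : V → Bool) (e : Sym2 V) : edgeSpin (spinFlip σ) e = edgeSpin σ e := by
  induction e with
  | _ x y => simp [spinFlip]

@[simp]
lemma cfnWeight_spinFlip (F : Finset (Sym2 V)) (θ : Sym2 V → ℝ) (σ : V → Bool) :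
    cfnWeight F θ (spinFlip σ) = cfnWeight F θ σ := by
  simp [cfnWeight]

variable [Fintype V] [DecidableEq V]

lemma cfnProb_preimage_spinFlip (W : Finset V) (F : Finset (Sym2 V)) (θ : Sym2 V → ℝ)
    (A : Set (V → Bool)) : cfnProb W F θ (spinFlip ⁻¹' A) = cfnProb W F θ A := by
  unfold cfnProb
  congr 1
  refine Fintype.sum_bijective spinFlip spinFlip_involutive.bijective _ _ fun σ => ?_
  simp [Set.indicator_apply]

lemma magnetization_spinFlip (W : Finset V) (F : Finset (Sym2 V)) (θ : Sym2 V → ℝ) (u : V)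
    (Lu : Finset V) (τ : V → Bool) :
    magnetization W F θ u Lu (spinFlip τ) = -magnetization W F θ u Lu τ := by
  have event_flip : ∀ c : Bool, {η : V → Bool | η u = c ∧ ∀ x ∈ Lu, η x = spinFlip τ x} =
      spinFlip ⁻¹' {η | η u = !c ∧ ∀ x ∈ Lu, η x = τ x} := by
    intro c
    ext η
    simp [spinFlip, Bool.eq_not_iff]
  have leaves_flip : {η : V → Bool | ∀ x ∈ Lu, η x = spinFlip τ x} =
      spinFlip ⁻¹' {η | ∀ x ∈ Lu, η x = τ x} := by
    ext η
    simp [spinFlip, Bool.eq_not_iff]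
  unfold magnetization
  rw [event_flip, event_flip, leaves_flip]
  simp only [cfnProb_preimage_spinFlip, Bool.not_true, Bool.not_false]
  ring

end SpinFlip

section Normalization

variable [DecidableEq V]

def flipAt (w : V) (σ : V → Bool) : V → Bool := Function.update σ w (!σ w)

lemma flipAt_involutive (w : V) : Function.Involutive (flipAt w) := by
  intro σ
  simp [flipAt]

lemma edgeSpin_flipAt_of_notMem (σ : V → Bool) {w : V} {e : Sym2 V} (hw : w ∉ e) :
    edgeSpin (flipAt w σ) e = edgeSpin σ e := by
  induction e with
  | _ x y =>
    simp only [Sym2.mem_iff, not_or] at hw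
    simp [flipAt, Function.update_of_ne (Ne.symm hw.1), Function.update_of_ne (Ne.symm hw.2)]

lemma edgeSpin_flipAt_mk (σ : V → Bool) {w x : V} (hwx : w ≠ x) :
    edgeSpin (flipAt w σ) s(w, x) = -edgeSpin σ s(w, x) := by
  simp [flipAt, Function.update_of_ne hwx.symm]

lemma sum_prod_edgeSpin_mul_eq_zero {G : SimpleGraph V} [Fintype V] (hT : G.IsTree)
    {t : Finset (Sym2 V)} (ht : ∀ e ∈ t, e ∈ G.edgeSet) (hne : t.Nonempty) (θ : Sym2 V → ℝ) :
    ∑ σ : V → Bool, ∏ e ∈ t, edgeSpin σ e * θ e = 0 := by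
  obtain ⟨w, e₀, he₀, hwe₀, huniq⟩ := hT.exists_vertex_mem_unique_edge ht hne
  obtain ⟨x, rfl⟩ := Sym2.mem_iff_exists.mp hwe₀
  have hwx : w ≠ x := G.ne_of_adj (ht _ he₀)
  have hodd : ∀ σ, -∏ e ∈ t, edgeSpin σ e * θ e = ∏ e ∈ t, edgeSpin (flipAt w σ) e * θ e := by
    intro σ
    have hrest : ∏ e ∈ t.erase s(w, x), edgeSpin (flipAt w σ) e * θ e =
        ∏ e ∈ t.erase s(w, x), edgeSpin σ e * θ e := by
      refine Finset.prod_congr rfl fun e he => ?_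
      rw [edgeSpin_flipAt_of_notMem σ fun hw =>
        Finset.ne_of_mem_erase he (huniq e (Finset.mem_of_mem_erase he) hw)]
    rw [← Finset.mul_prod_erase t _ he₀, ← Finset.mul_prod_erase t _ he₀,
      edgeSpin_flipAt_mk σ hwx, hrest]
    ring
  have hsum := Fintype.sum_bijective (flipAt w) (flipAt_involutive w).bijective
    (fun σ => -∏ e ∈ t, edgeSpin σ e * θ e) (fun σ => ∏ e ∈ t, edgeSpin σ e * θ e) hodd
  rw [Finset.sum_neg_distrib] at hsum
  linarith

variable [Fintype V] {G : SimpleGraph V} [DecidableRel G.Adj]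

lemma sum_prod_one_add_edgeSpin_mul (hT : G.IsTree) (θ : Sym2 V → ℝ) :
    ∑ σ : V → Bool, ∏ e ∈ G.edgeFinset, (1 + edgeSpin σ e * θ e) = 2 ^ Fintype.card V := by
  simp_rw [Finset.prod_one_add]
  rw [Finset.sum_comm, Finset.sum_eq_single_of_mem ∅ (Finset.empty_mem_powerset _)]
  · simp
  · intro t ht hne
    exact sum_prod_edgeSpin_mul_eq_zero hT
      (fun e he => SimpleGraph.mem_edgeFinset.mp (Finset.mem_powerset.mp ht he))
      (Finset.nonempty_iff_ne_empty.mpr hne) θ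

lemma sum_cfnWeight_eq_one (hT : G.IsTree) (θ : Sym2 V → ℝ) :
    ∑ σ : V → Bool, cfnWeight G.edgeFinset θ σ = 1 := by
  simp only [cfnWeight, Finset.prod_div_distrib, Finset.prod_const, ← Finset.mul_sum,
    ← Finset.sum_div, sum_prod_one_add_edgeSpin_mul hT, ← hT.card_edgeFinset]
  field_simp
  ring

end Normalization

end CFN

theorem unsigned_magnetization_indep_root_spin_general
    {V : Type*} [Fintype V] [DecidableEq V] (G : SimpleGraph V) [DecidableRel G.Adj]
    (hT : G.IsTree) (u v : V) (θs : Sym2 V → ℝ) (θh : Sym2 V → ℝ) :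
    ∀ A B : Set ℝ,
      CFN.cfnProb Finset.univ G.edgeFinset θs
          {σ | CFN.spin (σ u) * CFN.descMag G u v θh σ ∈ A ∧ CFN.spin (σ u) ∈ B} =
        CFN.cfnProb Finset.univ G.edgeFinset θs
            {σ | CFN.spin (σ u) * CFN.descMag G u v θh σ ∈ A} *
          CFN.cfnProb Finset.univ G.edgeFinset θs {σ | CFN.spin (σ u) ∈ B} := by
  intro A B
  -- both factors of the unsigned magnetization change sign under the global flip
  have hX : CFN.spinFlip ⁻¹' {σ | CFN.spin (σ u) * CFN.descMag G u v θh σ ∈ A} =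
      {σ | CFN.spin (σ u) * CFN.descMag G u v θh σ ∈ A} := by
    ext σ
    simp [CFN.descMag, CFN.magnetization_spinFlip, CFN.spinFlip]
  simp only [CFN.cfnProb_univ]
  exact sum_indicator_inter_eq_mul_of_involutive (CFN.sum_cfnWeight_eq_one hT θs)
    CFN.spinFlip_involutive (CFN.cfnWeight_spinFlip _ _) (b := fun σ => σ u) (fun _ => rfl) hX
    (CFN.spin ⁻¹' B)

/-- **Claim (independence of the unsigned magnetization and the root spin).**
If `σ ∼ P_{θ*}`, then `σ_u · Z_u^{θ̂,T_u}(σ_{L_u})` is independent of `σ_u`: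
for all sets `A, B ⊆ ℝ`,
`P(σ_u Z_u ∈ A and σ_u ∈ B) = P(σ_u Z_u ∈ A) · P(σ_u ∈ B)`. -/
theorem unsigned_magnetization_indep_root_spin
    {V : Type*} [Fintype V] [DecidableEq V] (G : SimpleGraph V) [DecidableRel G.Adj]
    (hT : G.IsTree) (hbin : ∀ w : V, G.degree w = 1 ∨ G.degree w = 3)
    (u v : V) (huv : u ≠ v)
    (θs : Sym2 V → ℝ) (hθs : ∀ e ∈ G.edgeFinset, θs e ∈ Set.Ioo (-1 : ℝ) 1)
    (θh : Sym2 V → ℝ) (hθh : ∀ e ∈ CFN.descEdges G u v, θh e ∈ Set.Ioo (-1 : ℝ) 1) :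
    ∀ A B : Set ℝ,
      CFN.cfnProb Finset.univ G.edgeFinset θs
          {σ | CFN.spin (σ u) * CFN.descMag G u v θh σ ∈ A ∧ CFN.spin (σ u) ∈ B} =
        CFN.cfnProb Finset.univ G.edgeFinset θs
            {σ | CFN.spin (σ u) * CFN.descMag G u v θh σ ∈ A} *
          CFN.cfnProb Finset.univ G.edgeFinset θs {σ | CFN.spin (σ u) ∈ B} :=
  unsigned_magnetization_indep_root_spin_general G hT u v θs θh
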